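/- (Global convergence of SOVI) Let S and A be finite nonempty sets, p : S × A × S → ℝ with p(j|i,a) ≥ 0 and Σ_{j∈S} p(j|i,a) = 1 for all (i,a), r : S × A → ℝ, 0 ≤ γ < 1, and N > 0. Let Q' be the unique fixed point of the modified Bellman operator U. Then for any initial Q_0 : S × A → ℝ, the SOVI iterates Q_{n+1} = Q_n − (I − J_U(Q_n))^{-1}·(Q_n − UQ_n), where J_U(Q)((i,a),(k,c)) = γ·p(k|i,a)·e^{N·Q(k,c)}/(Σ_{b∈A} e^{N·Q(k,b)}), converge to Q' as n → ∞. -/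

import Mathlib

/-!
The operator `U` is monotone, satisfies `U (Q + c) = U Q + γ c` (hence is a `γ`-contraction in
the sup norm) and is convex with `U Q + J_U(Q) (R - Q) ≤ U R`, where `J_U(Q)` is nonnegative with
row sums `γ`. The Newton equation `Q_{n+1} = U Q_n + J_U(Q_n) (Q_{n+1} - Q_n)` and convexity make
each `Q_{n+1}` a subsolution, `Q_{n+1} ≤ U Q_{n+1}`, hence `Q_{n+1} ≤ Q'`. Since `(I - J)⁻¹` is
monotone for a substochastic `J` (maximum principle), the next Newton step dominates a step of
value iteration: `U Q_{n+1} ≤ Q_{n+2} ≤ Q' = U Q'`. So the error contracts by the factor `γ`.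
-/

/-- The modified (log-sum-exp) Bellman operator `U` on `Q : S × A → ℝ`:
`(UQ)(i,a) = r(i,a) + γ·Σ_j p(j|i,a)·(1/N)·log(Σ_b e^{N·Q(j,b)})`. -/
noncomputable def modBellmanU {S A : Type*} [Fintype S] [Fintype A]
    (p : S → A → S → ℝ) (r : S → A → ℝ) (γ N : ℝ) (Q : S × A → ℝ) : S × A → ℝ :=
  fun ia => r ia.1 ia.2 + γ * ∑ j, p ia.1 ia.2 j *
    ((1 / N) * Real.log (∑ b, Real.exp (N * Q (j, b))))

/-- The Jacobian matrix of the modified Bellman operator: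
`J_U(Q)((i,a),(k,c)) = γ·p(k|i,a)·e^{N·Q(k,c)} / Σ_b e^{N·Q(k,b)}`. -/
noncomputable def jacU {S A : Type*} [Fintype A]
    (p : S → A → S → ℝ) (γ N : ℝ) (Q : S × A → ℝ) : Matrix (S × A) (S × A) ℝ :=
  Matrix.of fun ia kc =>
    γ * p ia.1 ia.2 kc.1 * (Real.exp (N * Q kc) / ∑ b, Real.exp (N * Q (kc.1, b)))

open Filter Topology Finset Matrix

section LogSumExp

variable {A : Type*} [Fintype A] {N : ℝ}

noncomputable def logSumExp (N : ℝ) (f : A → ℝ) : ℝ :=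
  (1 / N) * Real.log (∑ b, Real.exp (N * f b))

noncomputable def softmax (N : ℝ) (f : A → ℝ) (c : A) : ℝ :=
  Real.exp (N * f c) / ∑ b, Real.exp (N * f b)

variable [Nonempty A]

lemma sum_exp_pos (f : A → ℝ) : 0 < ∑ b, Real.exp (N * f b) :=
  sum_pos (fun _ _ => Real.exp_pos _) univ_nonempty

lemma softmax_nonneg (f : A → ℝ) (c : A) : 0 ≤ softmax N f c :=
  div_nonneg (Real.exp_pos _).le (sum_exp_pos f).le

lemma sum_softmax (f : A → ℝ) : ∑ c, softmax N f c = 1 := by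
  simp only [softmax, ← sum_div, div_self (sum_exp_pos f).ne']

lemma monotone_logSumExp (hN : 0 < N) : Monotone (logSumExp (A := A) N) := fun f g hfg => by
  refine mul_le_mul_of_nonneg_left (Real.log_le_log (sum_exp_pos f) ?_) (by positivity)
  exact sum_le_sum fun b _ => Real.exp_le_exp.2 (mul_le_mul_of_nonneg_left (hfg b) hN.le)

lemma logSumExp_add_const (hN : N ≠ 0) (f : A → ℝ) (c : ℝ) :
    logSumExp N (fun b => f b + c) = logSumExp N f + c := by
  have hexp : ∀ b, Real.exp (N * (f b + c)) = Real.exp (N * f b) * Real.exp (N * c) := by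
    intro b; rw [← Real.exp_add, mul_add]
  simp only [logSumExp, hexp, ← sum_mul]
  rw [Real.log_mul (sum_exp_pos f).ne' (Real.exp_pos _).ne', Real.log_exp]
  field_simp

/-- Gradient inequality for the convex function `logSumExp N`, via Jensen's inequality for `exp`. -/
lemma logSumExp_add_sum_softmax_mul_le (hN : 0 < N) (f g : A → ℝ) :
    logSumExp N f + ∑ c, softmax N f c * (g c - f c) ≤ logSumExp N g := by
  have hjensen : Real.exp (∑ c, softmax N f c * (N * (g c - f c)))
      ≤ ∑ c, softmax N f c * Real.exp (N * (g c - f c)) := by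
    simpa using convexOn_exp.map_sum_le (t := univ) (fun c _ => softmax_nonneg f c)
      (sum_softmax f) (fun c _ => Set.mem_univ (N * (g c - f c)))
  have hratio : ∑ c, softmax N f c * Real.exp (N * (g c - f c))
      = (∑ c, Real.exp (N * g c)) / ∑ b, Real.exp (N * f b) := by
    rw [sum_div]
    refine sum_congr rfl fun c _ => ?_
    rw [softmax, div_mul_eq_mul_div, ← Real.exp_add]
    ring_nf
  rw [hratio, ← Real.le_log_iff_exp_le (div_pos (sum_exp_pos g) (sum_exp_pos f)),
    Real.log_div (sum_exp_pos g).ne' (sum_exp_pos f).ne'] at hjensen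
  have hscaled : ∑ c, softmax N f c * (g c - f c)
      ≤ (Real.log (∑ c, Real.exp (N * g c)) - Real.log (∑ b, Real.exp (N * f b))) / N := by
    rw [le_div_iff₀' hN, mul_sum]
    simpa only [mul_left_comm N] using hjensen
  rw [logSumExp, logSumExp, one_div_mul_eq_div, one_div_mul_eq_div]
  rw [sub_div] at hscaled
  linarith

end LogSumExp

namespace Matrix

variable {ι : Type*} [Fintype ι] {J : Matrix ι ι ℝ}

lemma mulVec_nonneg (hJ : ∀ i j, 0 ≤ J i j) {v : ι → ℝ} (hv : 0 ≤ v) : 0 ≤ J *ᵥ v :=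
  fun i => sum_nonneg fun j _ => mul_nonneg (hJ i j) (hv j)

/-- Discrete maximum principle for a strictly substochastic matrix, applied at a minimum of `v`. -/
lemma nonneg_of_eq_mulVec_add (hJ0 : ∀ i j, 0 ≤ J i j) (hJ1 : ∀ i, ∑ j, J i j < 1)
    {v g : ι → ℝ} (hv : v = J *ᵥ v + g) (hg : 0 ≤ g) : 0 ≤ v := by
  intro i
  have : Nonempty ι := ⟨i⟩
  obtain ⟨k, -, hk⟩ := exists_min_image univ v univ_nonempty
  have hJv : (∑ j, J k j) * v k ≤ (J *ᵥ v) k := by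
    rw [sum_mul]
    exact sum_le_sum fun j _ => mul_le_mul_of_nonneg_left (hk j (mem_univ j)) (hJ0 k j)
  have hvk : v k = (J *ᵥ v) k + g k := congrFun hv k
  have hgk : 0 ≤ g k := hg k
  have hk0 : 0 ≤ (1 - ∑ j, J k j) * v k := by rw [sub_mul, one_mul]; linarith
  rw [mul_nonneg_iff_of_pos_left (sub_pos.2 (hJ1 k))] at hk0
  exact hk0.trans (hk i (mem_univ i))

variable [DecidableEq ι]

lemma isUnit_det_one_sub (hJ0 : ∀ i j, 0 ≤ J i j) (hJ1 : ∀ i, ∑ j, J i j < 1) :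
    IsUnit (1 - J).det := by
  rw [isUnit_iff_ne_zero, Ne, ← exists_mulVec_eq_zero_iff.not]
  rintro ⟨v, hv0, hv⟩
  have hfix : ∀ w : ι → ℝ, (1 - J) *ᵥ w = 0 → w = J *ᵥ w + 0 := fun w hw => by
    rw [sub_mulVec, one_mulVec, sub_eq_zero] at hw
    rwa [add_zero]
  have hpos : 0 ≤ v := nonneg_of_eq_mulVec_add hJ0 hJ1 (hfix v hv) le_rfl
  have hneg : 0 ≤ -v := nonneg_of_eq_mulVec_add hJ0 hJ1
    (hfix (-v) (by rw [mulVec_neg, hv, neg_zero])) le_rfl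
  exact hv0 (le_antisymm (neg_nonneg.1 hneg) hpos)

lemma eq_add_mulVec_sub_of_eq_sub_inv_mulVec (hJ : IsUnit (1 - J).det) {x y u : ι → ℝ}
    (hy : y = x - (1 - J)⁻¹ *ᵥ (x - u)) : y = u + J *ᵥ (y - x) := by
  have hsolve : (1 - J) *ᵥ (y - x) = u - x := by
    rw [hy, sub_sub_cancel_left, mulVec_neg, mulVec_mulVec, mul_nonsing_inv _ hJ, one_mulVec,
      neg_sub]
  rw [sub_mulVec, one_mulVec] at hsolve
  linear_combination hsolve

end Matrix

section NewtonIteration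

variable {ι : Type*} [Fintype ι] {T : (ι → ℝ) → ι → ℝ} {γ : ℝ}

lemma le_of_le_map_of_map_eq (hT : Monotone T)
    (hTc : ∀ x c, T (x + fun _ => c) = T x + fun _ => γ * c) (hγ1 : γ < 1)
    {x y : ι → ℝ} (hx : x ≤ T x) (hy : T y = y) : x ≤ y := by
  intro i
  have : Nonempty ι := ⟨i⟩
  obtain ⟨k, -, hk⟩ := exists_max_image univ (fun j => x j - y j) univ_nonempty
  have hbound : x ≤ y + fun _ => x k - y k := fun j => by
    have := hk j (mem_univ j)
    simp only [Pi.add_apply]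
    linarith
  have hTk : x k ≤ y k + γ * (x k - y k) := by
    simpa [hTc, hy] using (hx k).trans (hT hbound k)
  have hk0 : x k - y k ≤ 0 := by nlinarith
  linarith [hk i (mem_univ i)]

lemma norm_map_sub_map_le (hT : Monotone T)
    (hTc : ∀ x c, T (x + fun _ => c) = T x + fun _ => γ * c) (hγ0 : 0 ≤ γ) (x y : ι → ℝ) :
    ‖T x - T y‖ ≤ γ * ‖x - y‖ := by
  have hone_sided : ∀ x y : ι → ℝ, ∀ i, T x i - T y i ≤ γ * ‖x - y‖ := by
    intro x y i
    have hle : x ≤ y + fun _ => ‖x - y‖ := fun j => by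
      have := (le_abs_self _).trans (norm_le_pi_norm (x - y) j)
      simp only [Pi.add_apply, Pi.sub_apply] at this ⊢
      linarith
    have := hT hle i
    simp only [hTc, Pi.add_apply] at this
    linarith
  refine (pi_norm_le_iff_of_nonneg (by positivity)).2 fun i => ?_
  rw [Pi.sub_apply, Real.norm_eq_abs, abs_sub_le_iff]
  exact ⟨hone_sided x y i, norm_sub_rev x y ▸ hone_sided y x i⟩

lemma norm_sub_le_norm_sub_of_le_of_le {a b c : ι → ℝ} (hab : a ≤ b) (hbc : b ≤ c) :
    ‖b - c‖ ≤ ‖a - c‖ := by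
  refine (pi_norm_le_iff_of_nonneg (norm_nonneg _)).2 fun i => ?_
  refine le_trans ?_ (norm_le_pi_norm (a - c) i)
  simp only [Pi.sub_apply, Real.norm_eq_abs]
  rw [abs_sub_comm, abs_sub_comm (a i), abs_of_nonneg (sub_nonneg.2 (hbc i)),
    abs_of_nonneg (sub_nonneg.2 ((hab i).trans (hbc i)))]
  linarith [hab i]

theorem tendsto_newton_iterate [DecidableEq ι] {J : (ι → ℝ) → Matrix ι ι ℝ}
    (hT : Monotone T) (hTc : ∀ x c, T (x + fun _ => c) = T x + fun _ => γ * c)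
    (hTJ : ∀ x y, T x + J x *ᵥ (y - x) ≤ T y)
    (hJ0 : ∀ x i j, 0 ≤ J x i j) (hJ1 : ∀ x i, ∑ j, J x i j < 1) (hγ0 : 0 ≤ γ) (hγ1 : γ < 1)
    {x' : ι → ℝ} (hx' : T x' = x') {x : ℕ → ι → ℝ}
    (hx : ∀ n, x (n + 1) = x n - (1 - J (x n))⁻¹ *ᵥ (x n - T (x n))) :
    Tendsto x atTop (𝓝 x') := by
  have hstep (n : ℕ) : x (n + 1) = T (x n) + J (x n) *ᵥ (x (n + 1) - x n) :=
    Matrix.eq_add_mulVec_sub_of_eq_sub_inv_mulVec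
      (Matrix.isUnit_det_one_sub (hJ0 _) (hJ1 _)) (hx n)
  have hsub (n : ℕ) : x (n + 1) ≤ T (x (n + 1)) := (hstep n).trans_le (hTJ _ _)
  have hle (n : ℕ) : x (n + 1) ≤ x' := le_of_le_map_of_map_eq hT hTc hγ1 (hsub n) hx'
  have hge (n : ℕ) : T (x (n + 1)) ≤ x (n + 2) := by
    have hinc : 0 ≤ x (n + 2) - x (n + 1) := by
      refine Matrix.nonneg_of_eq_mulVec_add (hJ0 (x (n + 1))) (hJ1 (x (n + 1))) ?_
        (sub_nonneg.2 (hsub n))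
      conv_lhs => rw [hstep (n + 1)]
      abel
    rw [hstep (n + 1)]
    exact le_add_of_nonneg_right (Matrix.mulVec_nonneg (hJ0 _) hinc)
  have hcontract (n : ℕ) : ‖x (n + 2) - x'‖ ≤ γ * ‖x (n + 1) - x'‖ :=
    calc ‖x (n + 2) - x'‖ ≤ ‖T (x (n + 1)) - T x'‖ := by
          rw [hx']; exact norm_sub_le_norm_sub_of_le_of_le (hge n) (hle (n + 1))
      _ ≤ γ * ‖x (n + 1) - x'‖ := norm_map_sub_map_le hT hTc hγ0 _ _
  rw [← tendsto_add_atTop_iff_nat 1, tendsto_iff_norm_sub_tendsto_zero]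
  refine squeeze_zero (fun _ => norm_nonneg _)
    (fun n => le_geom (u := fun n => ‖x (n + 1) - x'‖) hγ0 n fun k _ => hcontract k) ?_
  simpa using (tendsto_pow_atTop_nhds_zero_of_lt_one hγ0 hγ1).mul_const ‖x (0 + 1) - x'‖

end NewtonIteration

section ModBellman

variable {S A : Type*} [Fintype A] {p : S → A → S → ℝ} {r : S → A → ℝ} {γ N : ℝ}

lemma jacU_apply (Q : S × A → ℝ) (ia kc : S × A) :
    jacU p γ N Q ia kc = γ * p ia.1 ia.2 kc.1 * softmax N (fun b => Q (kc.1, b)) kc.2 := rfl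

lemma jacU_nonneg (hp0 : ∀ i a j, 0 ≤ p i a j) (hγ0 : 0 ≤ γ) (Q : S × A → ℝ) (ia kc : S × A) :
    0 ≤ jacU p γ N Q ia kc := by
  have : Nonempty A := ⟨kc.2⟩
  rw [jacU_apply]
  exact mul_nonneg (mul_nonneg hγ0 (hp0 _ _ _)) (softmax_nonneg _ _)

variable [Fintype S]

lemma modBellmanU_apply (Q : S × A → ℝ) (ia : S × A) :
    modBellmanU p r γ N Q ia
      = r ia.1 ia.2 + γ * ∑ j, p ia.1 ia.2 j * logSumExp N (fun b => Q (j, b)) := rfl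

lemma jacU_mulVec_apply (Q v : S × A → ℝ) (ia : S × A) :
    (jacU p γ N Q *ᵥ v) ia
      = γ * ∑ k, p ia.1 ia.2 k * ∑ c, softmax N (fun b => Q (k, b)) c * v (k, c) := by
  simp only [mulVec, dotProduct, jacU_apply, Fintype.sum_prod_type, mul_sum]
  exact sum_congr rfl fun k _ => sum_congr rfl fun c _ => by ring

lemma sum_jacU (hp1 : ∀ i a, ∑ j, p i a j = 1) (Q : S × A → ℝ) (ia : S × A) :
    ∑ kc, jacU p γ N Q ia kc = γ := by
  have : Nonempty A := ⟨ia.2⟩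
  simp only [jacU_apply, Fintype.sum_prod_type, ← mul_sum, sum_softmax, mul_one, hp1]

lemma monotone_modBellmanU (hp0 : ∀ i a j, 0 ≤ p i a j) (hγ0 : 0 ≤ γ) (hN : 0 < N) :
    Monotone (modBellmanU p r γ N) := fun Q R hQR ia => by
  have : Nonempty A := ⟨ia.2⟩
  simp only [modBellmanU_apply]
  gcongr with j
  · exact hp0 _ _ _
  · exact monotone_logSumExp hN fun b => hQR (j, b)

lemma modBellmanU_add_const (hp1 : ∀ i a, ∑ j, p i a j = 1) (hN : N ≠ 0) (Q : S × A → ℝ)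
    (c : ℝ) : modBellmanU p r γ N (Q + fun _ => c) = modBellmanU p r γ N Q + fun _ => γ * c := by
  funext ia
  have : Nonempty A := ⟨ia.2⟩
  simp only [modBellmanU_apply, Pi.add_apply, logSumExp_add_const hN, mul_add, sum_add_distrib,
    ← sum_mul, hp1]
  ring

lemma modBellmanU_add_jacU_mulVec_le (hp0 : ∀ i a j, 0 ≤ p i a j) (hγ0 : 0 ≤ γ) (hN : 0 < N)
    (Q R : S × A → ℝ) :
    modBellmanU p r γ N Q + jacU p γ N Q *ᵥ (R - Q) ≤ modBellmanU p r γ N R := fun ia => by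
  have : Nonempty A := ⟨ia.2⟩
  simp only [Pi.add_apply, jacU_mulVec_apply, modBellmanU_apply, Pi.sub_apply, add_assoc,
    ← mul_add, ← sum_add_distrib]
  gcongr with k
  · exact hp0 _ _ _
  · exact logSumExp_add_sum_softmax_mul_le hN _ _

end ModBellman

theorem sovi_global_convergence_general {S A : Type*}
    [Fintype S] [Fintype A] [DecidableEq S] [DecidableEq A]
    (p : S → A → S → ℝ) (hp0 : ∀ i a j, 0 ≤ p i a j) (hp1 : ∀ i a, ∑ j, p i a j = 1)
    (r : S → A → ℝ) (γ : ℝ) (hγ0 : 0 ≤ γ) (hγ1 : γ < 1) (N : ℝ) (hN : 0 < N)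
    (Q' : S × A → ℝ) (hQ' : modBellmanU p r γ N Q' = Q')
    (Q : ℕ → S × A → ℝ)
    (hiter : ∀ n : ℕ, Q (n + 1) = Q n -
      ((1 : Matrix (S × A) (S × A) ℝ) - jacU p γ N (Q n))⁻¹.mulVec
        (Q n - modBellmanU p r γ N (Q n))) :
    Filter.Tendsto Q Filter.atTop (nhds Q') :=
  tendsto_newton_iterate (monotone_modBellmanU hp0 hγ0 hN) (modBellmanU_add_const hp1 hN.ne')
    (modBellmanU_add_jacU_mulVec_le hp0 hγ0 hN) (jacU_nonneg hp0 hγ0)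
    (fun Q ia => (sum_jacU hp1 Q ia).trans_lt hγ1) hγ0 hγ1 hQ' hiter

/-- **Global convergence of SOVI.** If `Q'` is the unique fixed point of the modified
Bellman operator `U`, then from any initial `Q_0` the SOVI iterates
`Q_{n+1} = Q_n − (I − J_U(Q_n))⁻¹ (Q_n − U Q_n)` converge to `Q'`. -/
theorem sovi_global_convergence {S A : Type*}
    [Fintype S] [Fintype A] [Nonempty S] [Nonempty A] [DecidableEq S] [DecidableEq A]
    (p : S → A → S → ℝ) (hp0 : ∀ i a j, 0 ≤ p i a j) (hp1 : ∀ i a, ∑ j, p i a j = 1)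
    (r : S → A → ℝ) (γ : ℝ) (hγ0 : 0 ≤ γ) (hγ1 : γ < 1) (N : ℝ) (hN : 0 < N)
    (Q' : S × A → ℝ) (hQ' : modBellmanU p r γ N Q' = Q')
    (Q : ℕ → S × A → ℝ)
    (hiter : ∀ n : ℕ, Q (n + 1) = Q n -
      ((1 : Matrix (S × A) (S × A) ℝ) - jacU p γ N (Q n))⁻¹.mulVec
        (Q n - modBellmanU p r γ N (Q n))) :
    Filter.Tendsto Q Filter.atTop (nhds Q') :=
  sovi_global_convergence_general p hp0 hp1 r γ hγ0 hγ1 N hN Q' hQ' Q hiter
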